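/- arXiv:1201.6425 — 6 statements merged into one kernel-verified Lean document; each statement's English description precedes it below -/
import Mathlib

section
/- Let $f(\alpha; p_1, p_2) = p_1 \log\frac{p_1}{\alpha p_1 + (1-\alpha)p_2} - p_2 \log\frac{p_2}{\alpha p_1 + (1-\alpha)p_2} - (p_1 - p_2)$ for $p_1, p_2, \alpha \in [0,1]$ (with natural logarithm and the convention $0 \log 0 = 0$). Then $f(1/e; p_1, p_2) \ge 0$ for all $p_1, p_2 \in [0,1]$, with equality if and only if $p_1 = p_2$ or $p_2 = 0$. -/
/-!
Since `f α` is positively homogeneous, for `p₂ > 0` the claim reduces to the sign of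
`g t := f(1/e; t, 1) = t log t - (t - 1) log (t + e - 1)` (`fRatio`) at `t = p₁ / p₂`; `g 1 = 0`.
With `u = t / (t + e - 1)` and `S u = log u / (u - 1)` the slope of the secant of `log` through
`1`, one finds `g' t = (1 - u) (S (1/e) - S u)`. Strict concavity of `log` makes `S` strictly
decreasing, and `u < 1/e ↔ t < 1`, so `g` decreases on `[0, 1]` and increases on `[1, ∞)`.
-/

open BigOperators

/-- The function `f(α; p₁, p₂)` from Lemma 1, with natural logarithm.
The convention `0 log 0 = 0` holds automatically since `Real.log 0 = 0`. -/
noncomputable def f (α p₁ p₂ : ℝ) : ℝ :=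
  p₁ * Real.log (p₁ / (α * p₁ + (1 - α) * p₂))
    - p₂ * Real.log (p₂ / (α * p₁ + (1 - α) * p₂)) - (p₁ - p₂)

open Real Set

lemma f_mul (α : ℝ) {c : ℝ} (hc : c ≠ 0) (p₁ p₂ : ℝ) :
    f α (c * p₁) (c * p₂) = c * f α p₁ p₂ := by
  have hm : α * (c * p₁) + (1 - α) * (c * p₂) = c * (α * p₁ + (1 - α) * p₂) := by ring
  simp only [f, hm, mul_div_mul_left _ _ hc]
  ring

lemma f_inv_exp_zero_right (p : ℝ) : f (exp 1)⁻¹ p 0 = 0 := by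
  rcases eq_or_ne p 0 with rfl | hp
  · simp [f]
  · have : p / ((exp 1)⁻¹ * p) = exp 1 := by field_simp
    simp [f, this]

noncomputable def fRatio (t : ℝ) : ℝ := t * log t - (t - 1) * log (t + (exp 1 - 1))

lemma one_lt_exp_one_sub_one : 1 < exp 1 - 1 := by
  linarith [exp_one_gt_d9]

lemma f_inv_exp_one_right {t : ℝ} (ht : 0 ≤ t) : f (exp 1)⁻¹ t 1 = fRatio t := by
  have hk : 0 < t + (exp 1 - 1) := by linarith [one_lt_exp_one_sub_one]
  have hm : (exp 1)⁻¹ * t + (1 - (exp 1)⁻¹) * 1 = (t + (exp 1 - 1)) / exp 1 := by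
    field_simp
  have hlog_inv : log (1 / ((t + (exp 1 - 1)) / exp 1)) = 1 - log (t + (exp 1 - 1)) := by
    rw [one_div_div, log_div (exp_pos 1).ne' hk.ne', log_exp]
  rw [f, fRatio, hm, hlog_inv]
  rcases ht.eq_or_lt with rfl | htpos
  · simp
  · rw [div_div_eq_mul_div, log_div (by positivity) hk.ne', log_mul htpos.ne' (exp_pos 1).ne',
      log_exp]
    ring

lemma hasDerivAt_fRatio {t : ℝ} (ht : 0 < t) :
    HasDerivAt fRatio (log t - log (t + (exp 1 - 1)) + exp 1 / (t + (exp 1 - 1))) t := by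
  have hk : 0 < t + (exp 1 - 1) := by linarith [one_lt_exp_one_sub_one]
  have h := ((hasDerivAt_id' t).mul (hasDerivAt_log ht.ne')).sub
    (((hasDerivAt_id' t).sub_const 1).mul (((hasDerivAt_id' t).add_const (exp 1 - 1)).log hk.ne'))
  refine h.congr_deriv ?_
  field_simp
  ring

lemma continuousOn_fRatio : ContinuousOn fRatio (Ici 0) := by
  refine continuous_mul_log.continuousOn.sub (ContinuousOn.mul (by fun_prop) ?_)
  refine ContinuousOn.log (by fun_prop) fun t ht => ?_
  linarith [one_lt_exp_one_sub_one, mem_Ici.mp ht]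

lemma log_div_sub_one_strictAntiOn :
    StrictAntiOn (fun u => log u / (u - 1)) (Ioi 0 \ {1}) := by
  intro x hx y hy hxy
  simpa using strictConcaveOn_log_Ioi.secant_strict_mono (mem_Ioi.mpr one_pos) hx.1 hy.1 hx.2
    hy.2 hxy

lemma deriv_fRatio {t : ℝ} (ht : 0 < t) :
    deriv fRatio t = (exp 1 - 1) / (t + (exp 1 - 1)) *
      (log (exp 1)⁻¹ / ((exp 1)⁻¹ - 1) -
        log (t / (t + (exp 1 - 1))) / (t / (t + (exp 1 - 1)) - 1)) := by
  have hk : 0 < t + (exp 1 - 1) := by linarith [one_lt_exp_one_sub_one]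
  have hk₀ : exp 1 - 1 ≠ 0 := by linarith [one_lt_exp_one_sub_one]
  have he : (exp 1)⁻¹ - 1 = -(exp 1 - 1) / exp 1 := by field_simp; ring
  have hu : t / (t + (exp 1 - 1)) - 1 = -(exp 1 - 1) / (t + (exp 1 - 1)) := by field_simp; ring
  rw [(hasDerivAt_fRatio ht).deriv, he, hu, log_inv, log_exp, log_div ht.ne' hk.ne']
  field_simp
  ring

lemma inv_exp_one_mem : (exp 1)⁻¹ ∈ Ioi 0 \ {1} :=
  ⟨inv_pos.mpr (exp_pos 1), (inv_lt_one_of_one_lt₀ (by linarith [one_lt_exp_one_sub_one])).ne⟩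

lemma div_add_exp_one_sub_one_mem {t : ℝ} (ht : 0 < t) :
    t / (t + (exp 1 - 1)) ∈ Ioi 0 \ {1} := by
  have hk : 0 < exp 1 - 1 := by linarith [one_lt_exp_one_sub_one]
  exact ⟨mem_Ioi.mpr (by positivity), ((div_lt_one (by positivity)).mpr (by linarith)).ne⟩

lemma deriv_fRatio_pos_iff {t : ℝ} (ht : 0 < t) : 0 < deriv fRatio t ↔ 1 < t := by
  have hk₀ : 0 < exp 1 - 1 := by linarith [one_lt_exp_one_sub_one]
  have hk : 0 < t + (exp 1 - 1) := by linarith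
  rw [deriv_fRatio ht, mul_pos_iff_of_pos_left (div_pos hk₀ hk), sub_pos,
    log_div_sub_one_strictAntiOn.lt_iff_gt (div_add_exp_one_sub_one_mem ht)
      inv_exp_one_mem, lt_div_iff₀ hk, inv_mul_lt_iff₀ (exp_pos 1)]
  constructor <;> intro h <;> nlinarith

lemma deriv_fRatio_neg_iff {t : ℝ} (ht : 0 < t) : deriv fRatio t < 0 ↔ t < 1 := by
  have hk₀ : 0 < exp 1 - 1 := by linarith [one_lt_exp_one_sub_one]
  have hk : 0 < t + (exp 1 - 1) := by linarith
  rw [deriv_fRatio ht, ← neg_pos, ← mul_neg, neg_sub, mul_pos_iff_of_pos_left (div_pos hk₀ hk),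
    sub_pos, log_div_sub_one_strictAntiOn.lt_iff_gt inv_exp_one_mem
      (div_add_exp_one_sub_one_mem ht), div_lt_iff₀ hk, lt_inv_mul_iff₀ (exp_pos 1)]
  constructor <;> intro h <;> nlinarith

lemma fRatio_strictAntiOn : StrictAntiOn fRatio (Icc 0 1) := by
  refine strictAntiOn_of_deriv_neg (convex_Icc 0 1) (continuousOn_fRatio.mono Icc_subset_Ici_self)
    fun t ht => ?_
  rw [interior_Icc] at ht
  exact (deriv_fRatio_neg_iff ht.1).mpr ht.2

lemma fRatio_strictMonoOn : StrictMonoOn fRatio (Ici 1) := by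
  refine strictMonoOn_of_deriv_pos (convex_Ici 1)
    (continuousOn_fRatio.mono (Ici_subset_Ici.mpr zero_le_one)) fun t ht => ?_
  rw [interior_Ici] at ht
  exact (deriv_fRatio_pos_iff (zero_lt_one.trans ht)).mpr ht

lemma fRatio_one : fRatio 1 = 0 := by simp [fRatio]

lemma fRatio_pos {t : ℝ} (ht : 0 ≤ t) (h1 : t ≠ 1) : 0 < fRatio t := by
  rw [← fRatio_one]
  rcases h1.lt_or_gt with h | h
  · exact fRatio_strictAntiOn ⟨ht, h.le⟩ ⟨zero_le_one, le_rfl⟩ h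
  · exact fRatio_strictMonoOn (mem_Ici.mpr le_rfl) (mem_Ici.mpr h.le) h

/-- `f(1/e; p₁, p₂) ≥ 0` for all `p₁, p₂ ∈ [0,1]`, with equality iff
`p₁ = p₂` or `p₂ = 0`. -/
theorem f_at_inv_e_nonneg (p₁ p₂ : ℝ)
    (hp₁ : p₁ ∈ Set.Icc (0 : ℝ) 1) (hp₂ : p₂ ∈ Set.Icc (0 : ℝ) 1) :
    0 ≤ f (Real.exp 1)⁻¹ p₁ p₂ ∧
      (f (Real.exp 1)⁻¹ p₁ p₂ = 0 ↔ p₁ = p₂ ∨ p₂ = 0) := by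
  rcases hp₂.1.eq_or_lt with rfl | hp₂pos
  · simp [f_inv_exp_zero_right]
  have ht : 0 ≤ p₁ / p₂ := div_nonneg hp₁.1 hp₂pos.le
  have hf : f (exp 1)⁻¹ p₁ p₂ = p₂ * fRatio (p₁ / p₂) := by
    rw [← f_inv_exp_one_right ht, ← f_mul _ hp₂pos.ne', mul_div_cancel₀ _ hp₂pos.ne', mul_one]
  rcases eq_or_ne p₁ p₂ with rfl | hne
  · simp [hf, div_self hp₂pos.ne', fRatio_one]
  · have hpos : 0 < f (exp 1)⁻¹ p₁ p₂ :=
      hf ▸ mul_pos hp₂pos (fRatio_pos ht (by rwa [Ne, div_eq_one_iff_eq hp₂pos.ne']))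
    exact ⟨hpos.le, by simp [hpos.ne', hne, hp₂pos.ne']⟩
end

section
/- Let $P_1$ and $P_2$ be probability distributions on a finite set $\mathcal{Y}$ with $P_1 \ne P_2$, and let $Q_{1/e}(y) = \frac{1}{e} P_1(y) + (1 - \frac{1}{e}) P_2(y)$. Then $D(P_1 \| Q_{1/e}) - D(P_2 \| Q_{1/e}) > 0$. -/
/-!
Write `q = λa + (1 - λ)b` with `0 < λ ≤ 1/e`. The summand gap `a log(a/q) - b log(b/q) - (a - b)`
vanishes at `a = b`, and its derivative in `a` is `log s - (s - 1)/(λ⁻¹ - 1)` with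
`s = a/q ∈ (0, λ⁻¹)`. Since `log λ⁻¹ ≥ 1`, concavity of `log` gives this derivative the sign of
`a - b`, so the gap is nonnegative, and positive when `b > 0` and `a ≠ b`. Summing over `y`, the
terms `a - b` cancel, and `P₁ ≠ P₂` of equal mass forces some `y` with `P₂ y > 0` and
`P₁ y ≠ P₂ y`.
-/

open Real Set Finset

noncomputable section

def mix (l a b : ℝ) : ℝ := l * a + (1 - l) * b

/-- `a log(a/q) - b log(b/q) - (a - b)` for `q = mix l a b`, with the logarithms of the quotients
split so that it is continuous at `a = 0` (see `mul_log_div_mix_sub_mul_log_div_mix`). -/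
def klGap (l a b : ℝ) : ℝ := a * log a - b * log b - (a - b) * log (mix l a b) - (a - b)

end

lemma mix_pos {l a b : ℝ} (hl0 : 0 ≤ l) (hl1 : l < 1) (ha : 0 ≤ a) (hb : 0 < b) :
    0 < mix l a b := by
  unfold mix; positivity

lemma mul_log_div_mix_sub_mul_log_div_mix {l a b : ℝ} (hl0 : 0 < l) (hl1 : l < 1)
    (ha : 0 ≤ a) (hb : 0 ≤ b) :
    a * log (a / mix l a b) - b * log (b / mix l a b) = klGap l a b + (a - b) := by
  rcases eq_or_ne (mix l a b) 0 with hq | hq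
  · obtain ⟨rfl, rfl⟩ : a = 0 ∧ b = 0 := by
      unfold mix at hq
      constructor <;> nlinarith [mul_nonneg hl0.le ha, mul_nonneg (sub_nonneg.2 hl1.le) hb]
    simp [klGap]
  have mul_log_div (x : ℝ) : x * log (x / mix l a b) = x * log x - x * log (mix l a b) := by
    rcases eq_or_ne x 0 with rfl | hx
    · simp
    · rw [log_div hx hq]; ring
  rw [mul_log_div, mul_log_div, klGap]; ring

lemma sub_one_div_lt_log {s R : ℝ} (hs : 1 < s) (hsR : s < R) (hR : exp 1 ≤ R) :
    (s - 1) / (R - 1) < log s := by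
  have hR1 : 1 < R := hs.trans hsR
  have secant := strictConcaveOn_log_Ioi.secant_strict_mono (a := 1) (mem_Ioi.2 one_pos)
    (mem_Ioi.2 (zero_lt_one.trans hs)) (mem_Ioi.2 (zero_lt_one.trans hR1)) hs.ne' hR1.ne' hsR
  have hlogR : 1 ≤ log R := by rwa [le_log_iff_exp_le (zero_lt_one.trans hR1)]
  rw [log_one, sub_zero, sub_zero, lt_div_iff₀ (sub_pos.2 hs)] at secant
  calc (s - 1) / (R - 1) ≤ log R / (R - 1) * (s - 1) := by
        rw [div_mul_eq_mul_div, mul_comm]; gcongr; nlinarith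
    _ < log s := secant

lemma log_lt_sub_one_div {s R : ℝ} (hs0 : 0 < s) (hs1 : s < 1) (hR : 2 < R) :
    log s < (s - 1) / (R - 1) := by
  calc log s < s - 1 := log_lt_sub_one_of_pos hs0 hs1.ne
    _ < (s - 1) / (R - 1) := by
      rw [lt_div_iff₀ (by linarith)]; nlinarith

lemma hasDerivAt_klGap {l b x : ℝ} (hl0 : l ≠ 0) (hl1 : l ≠ 1) (hx : x ≠ 0)
    (hq : mix l x b ≠ 0) :
    HasDerivAt (fun x => klGap l x b)
      (log (x / mix l x b) - (x / mix l x b - 1) / (l⁻¹ - 1)) x := by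
  have hmix : HasDerivAt (fun x => mix l x b) l x :=
    (((hasDerivAt_id x).const_mul l).add_const ((1 - l) * b)).congr_deriv (mul_one l)
  have := (((hasDerivAt_mul_log hx).sub_const (b * log b)).sub
    (((hasDerivAt_id x).sub_const b).mul (hmix.log hq))).sub ((hasDerivAt_id x).sub_const b)
  refine this.congr_deriv ?_
  rw [id_eq, log_div hx hq]
  have : 1 - l ≠ 0 := sub_ne_zero.2 (Ne.symm hl1)
  unfold mix at hq ⊢
  field_simp
  ring

lemma one_lt_div_mix_iff {l b x : ℝ} (hl1 : l < 1) (hq : 0 < mix l x b) :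
    1 < x / mix l x b ↔ b < x := by
  rw [one_lt_div hq, mix]
  constructor <;> intro h <;> nlinarith

lemma div_mix_lt_one_iff {l b x : ℝ} (hl1 : l < 1) (hq : 0 < mix l x b) :
    x / mix l x b < 1 ↔ x < b := by
  rw [div_lt_one hq, mix]
  constructor <;> intro h <;> nlinarith

lemma div_mix_lt_inv {l b x : ℝ} (hl0 : 0 < l) (hl1 : l < 1) (hb : 0 < b)
    (hq : 0 < mix l x b) :
    x / mix l x b < l⁻¹ := by
  rw [div_lt_iff₀ hq, mix, mul_add, ← mul_assoc, inv_mul_cancel₀ hl0.ne', one_mul]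
  have := sub_pos.2 hl1
  exact lt_add_of_pos_right x (by positivity)

lemma one_lt_of_exp_one_le_inv {l : ℝ} (hl0 : 0 < l) (hl : exp 1 ≤ l⁻¹) : l < 1 :=
  (one_lt_inv₀ hl0).1 (by linarith [exp_one_gt_d9])

lemma continuousOn_klGap {l b : ℝ} (hl0 : 0 ≤ l) (hl1 : l < 1) (hb : 0 < b) :
    ContinuousOn (fun x => klGap l x b) (Ici 0) := by
  have hlog : ContinuousOn (fun x => log (mix l x b)) (Ici 0) :=
    ContinuousOn.log (by unfold mix; fun_prop) fun x hx => (mix_pos hl0 hl1 hx hb).ne'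
  exact ((continuous_mul_log.continuousOn.sub continuousOn_const).sub
    ((continuousOn_id.sub continuousOn_const).mul hlog)).sub
      (continuousOn_id.sub continuousOn_const)

lemma strictMonoOn_klGap {l b : ℝ} (hl0 : 0 < l) (hl : exp 1 ≤ l⁻¹) (hb : 0 < b) :
    StrictMonoOn (fun x => klGap l x b) (Ici b) := by
  have hl1 := one_lt_of_exp_one_le_inv hl0 hl
  refine strictMonoOn_of_deriv_pos (convex_Ici b)
    ((continuousOn_klGap hl0.le hl1 hb).mono (Ici_subset_Ici.2 hb.le)) fun x hx => ?_
  rw [interior_Ici] at hx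
  have hq := mix_pos hl0.le hl1 (hb.trans hx).le hb
  rw [(hasDerivAt_klGap hl0.ne' hl1.ne (hb.trans hx).ne' hq.ne').deriv, sub_pos]
  exact sub_one_div_lt_log ((one_lt_div_mix_iff hl1 hq).2 hx) (div_mix_lt_inv hl0 hl1 hb hq) hl

lemma strictAntiOn_klGap {l b : ℝ} (hl0 : 0 < l) (hl : exp 1 ≤ l⁻¹) (hb : 0 < b) :
    StrictAntiOn (fun x => klGap l x b) (Icc 0 b) := by
  have hl1 := one_lt_of_exp_one_le_inv hl0 hl
  refine strictAntiOn_of_deriv_neg (convex_Icc 0 b)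
    ((continuousOn_klGap hl0.le hl1 hb).mono Icc_subset_Ici_self) fun x hx => ?_
  rw [interior_Icc] at hx
  have hq := mix_pos hl0.le hl1 hx.1.le hb
  rw [(hasDerivAt_klGap hl0.ne' hl1.ne hx.1.ne' hq.ne').deriv, sub_neg]
  exact log_lt_sub_one_div (div_pos hx.1 hq) ((div_mix_lt_one_iff hl1 hq).2 hx.2)
    (by linarith [exp_one_gt_d9])

lemma klGap_self (l b : ℝ) : klGap l b b = 0 := by
  simp [klGap]

lemma klGap_pos {l a b : ℝ} (hl0 : 0 < l) (hl : exp 1 ≤ l⁻¹) (ha : 0 ≤ a) (hb : 0 < b)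
    (hab : a ≠ b) : 0 < klGap l a b := by
  rw [← klGap_self l b]
  rcases hab.lt_or_gt with hab | hab
  · exact strictAntiOn_klGap hl0 hl hb ⟨ha, hab.le⟩ ⟨hb.le, le_rfl⟩ hab
  · exact strictMonoOn_klGap hl0 hl hb self_mem_Ici hab.le hab

lemma klGap_zero_right {l : ℝ} (hl0 : 0 < l) (a : ℝ) : klGap l a 0 = a * (log l⁻¹ - 1) := by
  rcases eq_or_ne a 0 with rfl | ha
  · simp [klGap]
  · simp [klGap, mix, log_mul hl0.ne' ha, log_inv]
    ring

lemma klGap_nonneg {l a b : ℝ} (hl0 : 0 < l) (hl : exp 1 ≤ l⁻¹) (ha : 0 ≤ a) (hb : 0 ≤ b) :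
    0 ≤ klGap l a b := by
  rcases hb.eq_or_lt with rfl | hb
  · rw [klGap_zero_right hl0]
    exact mul_nonneg ha (sub_nonneg.2 ((le_log_iff_exp_le (by positivity)).2 hl))
  rcases eq_or_ne a b with rfl | hab
  · rw [klGap_self]
  · exact (klGap_pos hl0 hl ha hb hab).le

lemma exists_ne_and_pos_of_sum_eq {ι M : Type*} [Fintype ι] [AddCommMonoid M] [LinearOrder M]
    [IsOrderedCancelAddMonoid M] {f g : ι → M} (hf : ∀ i, 0 ≤ f i)
    (hsum : ∑ i, f i = ∑ i, g i) (hne : f ≠ g) : ∃ i, f i ≠ g i ∧ 0 < g i := by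
  by_contra! h
  have hle : ∀ i ∈ Finset.univ, g i ≤ f i := fun i _ => by
    by_cases hi : f i = g i
    · exact hi.ge
    · exact (h i hi).trans (hf i)
  exact hne (funext fun i => ((sum_eq_sum_iff_of_le hle).1 hsum.symm i (Finset.mem_univ i)).symm)

/-- For any two distinct probability distributions `P₁ ≠ P₂` on a finite set `Y`,
with `Q = (1/e) P₁ + (1 - 1/e) P₂`, one has `D(P₁ ‖ Q) - D(P₂ ‖ Q) > 0`. -/
theorem kl_sub_kl_pos_at_inv_e {Y : Type*} [Fintype Y]
    (P₁ P₂ : Y → ℝ)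
    (hP₁ : ∀ y, 0 ≤ P₁ y) (hP₁sum : ∑ y, P₁ y = 1)
    (hP₂ : ∀ y, 0 ≤ P₂ y) (hP₂sum : ∑ y, P₂ y = 1)
    (hne : P₁ ≠ P₂)
    (Q : Y → ℝ)
    (hQ : ∀ y, Q y = (Real.exp 1)⁻¹ * P₁ y + (1 - (Real.exp 1)⁻¹) * P₂ y) :
    0 < (∑ y, P₁ y * Real.log (P₁ y / Q y))
        - ∑ y, P₂ y * Real.log (P₂ y / Q y) := by
  obtain rfl : Q = fun y => mix (exp 1)⁻¹ (P₁ y) (P₂ y) := funext hQ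
  have hl0 : 0 < (exp 1)⁻¹ := by positivity
  have hl : exp 1 ≤ (exp 1)⁻¹⁻¹ := (inv_inv _).ge
  have hl1 := one_lt_of_exp_one_le_inv hl0 hl
  obtain ⟨y₀, hne₀, hpos₀⟩ := exists_ne_and_pos_of_sum_eq hP₁ (hP₁sum.trans hP₂sum.symm) hne
  rw [← sum_sub_distrib]
  simp_rw [mul_log_div_mix_sub_mul_log_div_mix hl0 hl1 (hP₁ _) (hP₂ _)]
  rw [sum_add_distrib, sum_sub_distrib, hP₁sum, hP₂sum, sub_self, add_zero]
  exact sum_pos' (fun y _ => klGap_nonneg hl0 hl (hP₁ y) (hP₂ y))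
    ⟨y₀, Finset.mem_univ _, klGap_pos hl0 hl (hP₁ y₀) hpos₀ hne₀⟩
end

section
/- Let $P_1$ and $P_2$ be probability distributions on a finite set $\mathcal{Y}$ with $|\mathcal{Y}| \ge 2$ and $P_1 \ne P_2$, and for $\alpha \in [0,1]$ let $Q_\alpha(y) = \alpha P_1(y) + (1-\alpha) P_2(y)$ and $I(\alpha) = \sum_{y \in \mathcal{Y}} \big[ \alpha P_1(y) \log\frac{P_1(y)}{Q_\alpha(y)} + (1-\alpha) P_2(y) \log\frac{P_2(y)}{Q_\alpha(y)} \big]$. If $\alpha^* \in [0,1]$ satisfies $I(\alpha^*) = \max_{\alpha \in [0,1]} I(\alpha)$, then $\frac{1}{e} < \alpha^* < 1 - \frac{1}{e}$. -/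
/-!
Write `Q = α a + (1 - α) b` and `H = negMulLog`. Letter by letter, `I(α)` is the Jensen gap
`H(Q) - α H(a) - (1 - α) H(b)`, so on `(0, 1)` its derivative is `∑ y, mixSlope (P₁ y) (P₂ y) α`
with `mixSlope a b α = a log a - b log b - (a - b) (log Q + 1)`. Each `mixSlope` only decreases as
`α` grows (`Q` moves towards the larger of `a`, `b`), and at `α = 1/e` it equals `b φ(a / b)` with
`φ(t) = t log t - (t - 1) log (t + e - 1)`; `φ` vanishes to second order at `1`, is convex on
`(0, (e - 1)²]`, and is nonnegative on `[0, ∞)`, positive on `[0, 1)`. As `P₁ ≠ P₂` carry the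
same mass, some letter has `P₁ y < P₂ y`, so `I` is strictly increasing on `[0, 1/e]` and no
maximiser lies there. Swapping `P₁` and `P₂` turns `α` into `1 - α` and gives the upper bound.
-/

open Real Set

noncomputable def invExpSlope (t : ℝ) : ℝ := t * log t - (t - 1) * log (t + exp 1 - 1)

noncomputable def invExpSlopeDeriv (t : ℝ) : ℝ :=
  log t - log (t + exp 1 - 1) + exp 1 / (t + exp 1 - 1)

lemma add_exp_one_sub_one_pos {t : ℝ} (ht : 0 ≤ t) : 0 < t + exp 1 - 1 := by
  linarith [exp_one_gt_two]

lemma one_lt_exp_one_sub_one_sq : 1 < (exp 1 - 1) ^ 2 := by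
  nlinarith [exp_one_gt_two]

lemma inv_exp_one_lt_one : (exp 1)⁻¹ < 1 := inv_lt_one_of_one_lt₀ (by linarith [exp_one_gt_two])

lemma hasDerivAt_log_add_exp_one_sub_one {t : ℝ} (ht : 0 ≤ t) :
    HasDerivAt (fun t => log (t + exp 1 - 1)) (t + exp 1 - 1)⁻¹ t := by
  simpa using (((hasDerivAt_id t).add_const (exp 1)).sub_const 1).log
    (add_exp_one_sub_one_pos ht).ne'

lemma hasDerivAt_invExpSlope {t : ℝ} (ht : 0 < t) :
    HasDerivAt invExpSlope (invExpSlopeDeriv t) t := by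
  have hc := add_exp_one_sub_one_pos ht.le
  have := (hasDerivAt_mul_log ht.ne').sub
    (((hasDerivAt_id t).sub_const 1).mul (hasDerivAt_log_add_exp_one_sub_one ht.le))
  refine this.congr_deriv ?_
  simp only [invExpSlopeDeriv, id]
  field_simp
  ring

lemma hasDerivAt_invExpSlopeDeriv {t : ℝ} (ht : 0 < t) :
    HasDerivAt invExpSlopeDeriv (((exp 1 - 1) ^ 2 - t) / (t * (t + exp 1 - 1) ^ 2)) t := by
  have hc := add_exp_one_sub_one_pos ht.le
  have := ((hasDerivAt_log ht.ne').sub (hasDerivAt_log_add_exp_one_sub_one ht.le)).add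
    (((((hasDerivAt_id t).add_const (exp 1)).sub_const 1).inv hc.ne').const_mul (exp 1))
  refine this.congr_deriv ?_
  simp only [id]
  field_simp
  ring

lemma invExpSlopeDeriv_one : invExpSlopeDeriv 1 = 0 := by
  simp [invExpSlopeDeriv, (exp_pos 1).ne']

lemma strictMonoOn_invExpSlopeDeriv :
    StrictMonoOn invExpSlopeDeriv (Ioc 0 ((exp 1 - 1) ^ 2)) := by
  refine strictMonoOn_of_deriv_pos (convex_Ioc _ _)
    (fun t ht => (hasDerivAt_invExpSlopeDeriv ht.1).continuousAt.continuousWithinAt)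
    fun t ht => ?_
  rw [interior_Ioc] at ht
  rw [(hasDerivAt_invExpSlopeDeriv ht.1).deriv]
  have := add_exp_one_sub_one_pos ht.1.le
  exact div_pos (by linarith [ht.2]) (mul_pos ht.1 (by positivity))

lemma invExpSlopeDeriv_neg {t : ℝ} (h0 : 0 < t) (h1 : t < 1) : invExpSlopeDeriv t < 0 :=
  invExpSlopeDeriv_one ▸ strictMonoOn_invExpSlopeDeriv
    ⟨h0, h1.le.trans one_lt_exp_one_sub_one_sq.le⟩ ⟨one_pos, one_lt_exp_one_sub_one_sq.le⟩ h1

lemma invExpSlopeDeriv_nonneg {t : ℝ} (h1 : 1 ≤ t) : 0 ≤ invExpSlopeDeriv t := by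
  rcases le_total t ((exp 1 - 1) ^ 2) with h | h
  · exact invExpSlopeDeriv_one ▸ strictMonoOn_invExpSlopeDeriv.monotoneOn
      ⟨one_pos, one_lt_exp_one_sub_one_sq.le⟩ ⟨one_pos.trans_le h1, h⟩ h1
  · -- `log (1 + x) ≤ x` already suffices beyond the inflection point `(e - 1)²`
    have ht : 0 < t := one_pos.trans_le h1
    have hc := add_exp_one_sub_one_pos ht.le
    have hlog : log (t + exp 1 - 1) - log t ≤ (exp 1 - 1) / t := by
      rw [← log_div hc.ne' ht.ne']
      refine (log_le_sub_one_of_pos (by positivity)).trans_eq ?_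
      field_simp
      ring
    have key : 0 ≤ exp 1 / (t + exp 1 - 1) - (exp 1 - 1) / t := by
      rw [div_sub_div _ _ hc.ne' ht.ne']
      exact div_nonneg (by nlinarith) (by positivity)
    simp only [invExpSlopeDeriv]
    linarith

lemma invExpSlope_one : invExpSlope 1 = 0 := by simp [invExpSlope]

lemma continuousOn_invExpSlope : ContinuousOn invExpSlope (Ici 0) := by
  refine continuous_mul_log.continuousOn.sub (ContinuousOn.mul (by fun_prop) ?_)
  exact ContinuousOn.log (by fun_prop) fun t ht => (add_exp_one_sub_one_pos ht).ne'

lemma invExpSlope_pos {t : ℝ} (h0 : 0 ≤ t) (h1 : t < 1) : 0 < invExpSlope t := by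
  have hanti : StrictAntiOn invExpSlope (Icc 0 1) := by
    refine strictAntiOn_of_deriv_neg (convex_Icc 0 1)
      (continuousOn_invExpSlope.mono Icc_subset_Ici_self) fun s hs => ?_
    rw [interior_Icc] at hs
    rw [(hasDerivAt_invExpSlope hs.1).deriv]
    exact invExpSlopeDeriv_neg hs.1 hs.2
  exact invExpSlope_one ▸ hanti ⟨h0, h1.le⟩ ⟨zero_le_one, le_rfl⟩ h1

lemma invExpSlope_nonneg {t : ℝ} (h0 : 0 ≤ t) : 0 ≤ invExpSlope t := by
  rcases lt_or_ge t 1 with h1 | h1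
  · exact (invExpSlope_pos h0 h1).le
  have hmono : MonotoneOn invExpSlope (Ici 1) :=
    monotoneOn_of_hasDerivWithinAt_nonneg (convex_Ici 1)
      (continuousOn_invExpSlope.mono (Ici_subset_Ici.2 zero_le_one))
      (fun s hs =>
        (hasDerivAt_invExpSlope (one_pos.trans_le (interior_subset hs))).hasDerivWithinAt)
      fun s hs => invExpSlopeDeriv_nonneg (interior_subset hs)
  exact invExpSlope_one ▸ hmono (mem_Ici.2 le_rfl) h1 h1

noncomputable def mixSlope (a b α : ℝ) : ℝ :=
  a * log a - b * log b - (a - b) * (log (α * a + (1 - α) * b) + 1)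

lemma mix_pos_of_ne {a b α : ℝ} (ha : 0 ≤ a) (hb : 0 ≤ b) (hab : a ≠ b) (hα0 : 0 < α)
    (hα1 : α < 1) :
    0 < α * a + (1 - α) * b := by
  rcases hab.lt_or_gt with hab | hab
  · have : 0 < (1 - α) * b := mul_pos (by linarith) (ha.trans_lt hab)
    nlinarith
  · have : 0 < α * a := mul_pos hα0 (hb.trans_lt hab)
    nlinarith

lemma mixSlope_inv_exp_le {a b α : ℝ} (ha : 0 ≤ a) (hb : 0 ≤ b) (hα0 : 0 < α)
    (hα : α ≤ (exp 1)⁻¹) : mixSlope a b (exp 1)⁻¹ ≤ mixSlope a b α := by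
  suffices (a - b) * log (α * a + (1 - α) * b)
      ≤ (a - b) * log ((exp 1)⁻¹ * a + (1 - (exp 1)⁻¹) * b) by
    simp only [mixSlope, mul_add]
    linarith
  have he := inv_exp_one_lt_one
  rcases lt_trichotomy a b with hab | rfl | hab
  · refine mul_le_mul_of_nonpos_left
      (log_le_log (mix_pos_of_ne ha hb hab.ne (by positivity) he) (by nlinarith)) (by linarith)
  · simp
  · refine mul_le_mul_of_nonneg_left
      (log_le_log (mix_pos_of_ne ha hb hab.ne' hα0 (hα.trans_lt he)) (by nlinarith)) (by linarith)

lemma mixSlope_zero_right_inv_exp (a : ℝ) : mixSlope a 0 (exp 1)⁻¹ = 0 := by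
  rcases eq_or_ne a 0 with rfl | ha
  · simp [mixSlope]
  · simp [mixSlope, log_mul, ha, (exp_pos 1).ne']

lemma mixSlope_inv_exp {a b : ℝ} (ha : 0 ≤ a) (hb : 0 < b) :
    mixSlope a b (exp 1)⁻¹ = b * invExpSlope (a / b) := by
  have hc := add_exp_one_sub_one_pos (div_nonneg ha hb.le)
  have hmul_log : a * log a = b * (a / b * log (a / b)) + a * log b := by
    rcases ha.eq_or_lt with rfl | ha
    · simp
    · rw [log_div ha.ne' hb.ne']
      field_simp
      ring
  have hlog : log ((exp 1)⁻¹ * a + (1 - (exp 1)⁻¹) * b) = log (a / b + exp 1 - 1) + log b - 1 := by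
    rw [show (exp 1)⁻¹ * a + (1 - (exp 1)⁻¹) * b = (a / b + exp 1 - 1) * b * (exp 1)⁻¹ by
        field_simp; ring,
      log_mul (by positivity) (by positivity), log_mul hc.ne' hb.ne', log_inv, log_exp]
    ring
  rw [mixSlope, invExpSlope, hlog, hmul_log]
  field_simp
  ring

lemma mixSlope_inv_exp_nonneg {a b : ℝ} (ha : 0 ≤ a) (hb : 0 ≤ b) :
    0 ≤ mixSlope a b (exp 1)⁻¹ := by
  rcases hb.eq_or_lt with rfl | hb
  · rw [mixSlope_zero_right_inv_exp]
  · rw [mixSlope_inv_exp ha hb]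
    exact mul_nonneg hb.le (invExpSlope_nonneg (div_nonneg ha hb.le))

lemma mixSlope_inv_exp_pos {a b : ℝ} (ha : 0 ≤ a) (hab : a < b) :
    0 < mixSlope a b (exp 1)⁻¹ := by
  have hb := ha.trans_lt hab
  rw [mixSlope_inv_exp ha hb]
  exact mul_pos hb (invExpSlope_pos (div_nonneg ha hb.le) ((div_lt_one hb).2 hab))

lemma mixSlope_nonneg {a b α : ℝ} (ha : 0 ≤ a) (hb : 0 ≤ b) (hα0 : 0 < α)
    (hα : α ≤ (exp 1)⁻¹) : 0 ≤ mixSlope a b α :=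
  (mixSlope_inv_exp_nonneg ha hb).trans (mixSlope_inv_exp_le ha hb hα0 hα)

lemma mixSlope_pos {a b α : ℝ} (ha : 0 ≤ a) (hab : a < b) (hα0 : 0 < α)
    (hα : α ≤ (exp 1)⁻¹) : 0 < mixSlope a b α :=
  (mixSlope_inv_exp_pos ha hab).trans_le (mixSlope_inv_exp_le ha (ha.trans hab.le) hα0 hα)

lemma hasDerivAt_negMulLog_mix {a b α : ℝ} (ha : 0 ≤ a) (hb : 0 ≤ b) (hα0 : 0 < α)
    (hα1 : α < 1) :
    HasDerivAt (fun x => negMulLog (x * a + (1 - x) * b) - x * negMulLog a - (1 - x) * negMulLog b)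
      (mixSlope a b α) α := by
  rcases eq_or_ne a b with rfl | hab
  · have hconst : (fun x => negMulLog (x * a + (1 - x) * a) - x * negMulLog a
        - (1 - x) * negMulLog a) = fun _ => 0 := by
      funext x
      rw [show x * a + (1 - x) * a = a by ring]
      ring
    rw [hconst, show mixSlope a a α = 0 by simp [mixSlope]]
    exact hasDerivAt_const α 0
  · have hlin : HasDerivAt (fun x => x * a + (1 - x) * b) (a - b) α := by
      exact (((hasDerivAt_id' α).mul_const a).add
        (((hasDerivAt_id' α).const_sub 1).mul_const b)).congr_deriv (by ring)
    have := (((hasDerivAt_negMulLog (mix_pos_of_ne ha hb hab hα0 hα1).ne').comp α hlin).sub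
      ((hasDerivAt_id α).mul_const (negMulLog a))).sub
      (((hasDerivAt_id α).const_sub 1).mul_const (negMulLog b))
    refine this.congr_deriv ?_
    simp only [mixSlope, negMulLog]
    ring

lemma mul_log_div_mix_eq_negMulLog {a b α : ℝ} (ha : 0 ≤ a) (hb : 0 ≤ b) (hα : α ∈ Icc (0 : ℝ) 1) :
    α * a * log (a / (α * a + (1 - α) * b)) + (1 - α) * b * log (b / (α * a + (1 - α) * b))
      = negMulLog (α * a + (1 - α) * b) - α * negMulLog a - (1 - α) * negMulLog b := by
  set Q := α * a + (1 - α) * b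
  simp only [negMulLog]
  rcases eq_or_ne Q 0 with hQ0 | hQ0
  · have hαa : α * a = 0 ∧ (1 - α) * b = 0 :=
      (add_eq_zero_iff_of_nonneg (mul_nonneg hα.1 ha) (mul_nonneg (sub_nonneg.2 hα.2) hb)).1 hQ0
    linear_combination (log (a / Q) - log a) * hαa.1 + (log (b / Q) - log b) * hαa.2 + log Q * hQ0
  · have hdiv : ∀ x, x * log (x / Q) = x * log x - x * log Q := fun x => by
      rcases eq_or_ne x 0 with rfl | hx
      · simp
      · rw [log_div hx hQ0]; ring
    linear_combination α * hdiv a + (1 - α) * hdiv b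

lemma exists_lt_of_sum_eq_of_ne {ι M : Type*} [Fintype ι] [AddCommMonoid M] [LinearOrder M]
    [IsOrderedCancelAddMonoid M] {f g : ι → M} (hsum : ∑ i, f i = ∑ i, g i) (hne : f ≠ g) :
    ∃ i, f i < g i := by
  by_contra! h
  exact hne (funext fun i =>
    ((Finset.sum_eq_sum_iff_of_le fun i _ => h i).1 hsum.symm i (Finset.mem_univ i)).symm)

section BinaryChannel

variable {Y : Type*} [Fintype Y]

noncomputable def binaryMutualInfo (P₁ P₂ : Y → ℝ) (α : ℝ) : ℝ :=
  ∑ y, (α * P₁ y * log (P₁ y / (α * P₁ y + (1 - α) * P₂ y))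
    + (1 - α) * P₂ y * log (P₂ y / (α * P₁ y + (1 - α) * P₂ y)))

variable {P₁ P₂ : Y → ℝ}

lemma binaryMutualInfo_swap (α : ℝ) :
    binaryMutualInfo P₂ P₁ α = binaryMutualInfo P₁ P₂ (1 - α) := by
  refine Finset.sum_congr rfl fun y _ => ?_
  rw [show (1 - α) * P₁ y + (1 - (1 - α)) * P₂ y = α * P₂ y + (1 - α) * P₁ y by ring]
  ring

lemma binaryMutualInfo_eqOn (hP₁ : ∀ y, 0 ≤ P₁ y) (hP₂ : ∀ y, 0 ≤ P₂ y) :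
    EqOn (binaryMutualInfo P₁ P₂) (fun α => ∑ y, (negMulLog (α * P₁ y + (1 - α) * P₂ y)
      - α * negMulLog (P₁ y) - (1 - α) * negMulLog (P₂ y))) (Icc 0 1) := fun _ hα =>
  Finset.sum_congr rfl fun y _ => mul_log_div_mix_eq_negMulLog (hP₁ y) (hP₂ y) hα

lemma continuousOn_binaryMutualInfo (hP₁ : ∀ y, 0 ≤ P₁ y) (hP₂ : ∀ y, 0 ≤ P₂ y) :
    ContinuousOn (binaryMutualInfo P₁ P₂) (Icc 0 1) :=
  (Continuous.continuousOn (by fun_prop)).congr (binaryMutualInfo_eqOn hP₁ hP₂)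

lemma hasDerivAt_binaryMutualInfo (hP₁ : ∀ y, 0 ≤ P₁ y) (hP₂ : ∀ y, 0 ≤ P₂ y) {α : ℝ}
    (hα : α ∈ Ioo (0 : ℝ) 1) :
    HasDerivAt (binaryMutualInfo P₁ P₂) (∑ y, mixSlope (P₁ y) (P₂ y) α) α := by
  refine (HasDerivAt.fun_sum fun y _ =>
    hasDerivAt_negMulLog_mix (hP₁ y) (hP₂ y) hα.1 hα.2).congr_of_eventuallyEq ?_
  filter_upwards [Icc_mem_nhds hα.1 hα.2] with x hx using binaryMutualInfo_eqOn hP₁ hP₂ hx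

lemma inv_exp_lt_of_isMaxOn_binaryMutualInfo (hP₁ : ∀ y, 0 ≤ P₁ y) (hP₂ : ∀ y, 0 ≤ P₂ y)
    (hlt : ∃ y, P₁ y < P₂ y) {αstar : ℝ} (h0 : 0 ≤ αstar)
    (hmax : IsMaxOn (binaryMutualInfo P₁ P₂) (Icc 0 1) αstar) : (exp 1)⁻¹ < αstar := by
  have he := inv_exp_one_lt_one
  have hslope : ∀ α ∈ Ioc 0 (exp 1)⁻¹, 0 < ∑ y, mixSlope (P₁ y) (P₂ y) α := by
    obtain ⟨y₀, hy₀⟩ := hlt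
    exact fun α hα => Finset.sum_pos' (fun y _ => mixSlope_nonneg (hP₁ y) (hP₂ y) hα.1 hα.2)
      ⟨y₀, Finset.mem_univ _, mixSlope_pos (hP₁ y₀) hy₀ hα.1 hα.2⟩
  by_contra! hle
  rcases h0.eq_or_lt with rfl | hpos
  · -- the derivative may blow up at `0`, so compare `I 0` with `I (1/e)` instead
    have hmono : StrictMonoOn (binaryMutualInfo P₁ P₂) (Icc 0 (exp 1)⁻¹) := by
      refine strictMonoOn_of_deriv_pos (convex_Icc _ _)
        ((continuousOn_binaryMutualInfo hP₁ hP₂).mono (Icc_subset_Icc_right he.le)) fun x hx => ?_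
      rw [interior_Icc] at hx
      rw [(hasDerivAt_binaryMutualInfo hP₁ hP₂ ⟨hx.1, hx.2.trans he⟩).deriv]
      exact hslope x ⟨hx.1, hx.2.le⟩
    have hpos : (0 : ℝ) < (exp 1)⁻¹ := inv_pos.2 (exp_pos 1)
    exact (hmax ⟨hpos.le, he.le⟩).not_gt
      (hmono ⟨le_rfl, hpos.le⟩ ⟨hpos.le, le_rfl⟩ hpos)
  · have hlocal := hmax.isLocalMax (Icc_mem_nhds hpos (hle.trans_lt he))
    exact (hslope αstar ⟨hpos, hle⟩).ne'
      (hlocal.hasDerivAt_eq_zero (hasDerivAt_binaryMutualInfo hP₁ hP₂ ⟨hpos, hle.trans_lt he⟩))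

end BinaryChannel

theorem capacity_achieving_binary_input_mem_Ioo_general {Y : Type*} [Fintype Y]
    (P₁ P₂ : Y → ℝ)
    (hP₁ : ∀ y, 0 ≤ P₁ y) (hP₁sum : ∑ y, P₁ y = 1)
    (hP₂ : ∀ y, 0 ≤ P₂ y) (hP₂sum : ∑ y, P₂ y = 1)
    (hne : P₁ ≠ P₂)
    (Q : ℝ → Y → ℝ) (hQ : ∀ α y, Q α y = α * P₁ y + (1 - α) * P₂ y)
    (I : ℝ → ℝ)
    (hI : ∀ α, I α = ∑ y, (α * P₁ y * Real.log (P₁ y / Q α y)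
      + (1 - α) * P₂ y * Real.log (P₂ y / Q α y)))
    (αstar : ℝ) (hαstar : αstar ∈ Set.Icc (0 : ℝ) 1)
    (hmax : ∀ α ∈ Set.Icc (0 : ℝ) 1, I α ≤ I αstar) :
    (Real.exp 1)⁻¹ < αstar ∧ αstar < 1 - (Real.exp 1)⁻¹ := by
  obtain rfl : I = binaryMutualInfo P₁ P₂ := funext fun α => by simp only [hI, hQ, binaryMutualInfo]
  have hmax_swap : IsMaxOn (binaryMutualInfo P₂ P₁) (Icc 0 1) (1 - αstar) :=
    isMaxOn_iff.2 fun α hα => by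
      rw [binaryMutualInfo_swap α, binaryMutualInfo_swap (1 - αstar), sub_sub_cancel]
      exact hmax (1 - α) ⟨by linarith [hα.2], by linarith [hα.1]⟩
  have h₁₂ := exists_lt_of_sum_eq_of_ne (hP₁sum.trans hP₂sum.symm) hne
  have h₂₁ := exists_lt_of_sum_eq_of_ne (hP₂sum.trans hP₁sum.symm) hne.symm
  refine ⟨inv_exp_lt_of_isMaxOn_binaryMutualInfo hP₁ hP₂ h₁₂ hαstar.1 hmax, ?_⟩
  linarith [inv_exp_lt_of_isMaxOn_binaryMutualInfo hP₂ hP₁ h₂₁ (sub_nonneg.2 hαstar.2) hmax_swap]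

/-- For a binary-input DMC with distinct rows `P₁ ≠ P₂` on a finite output
alphabet `Y` with `|Y| ≥ 2`, any maximizer `α⋆ ∈ [0,1]` of the mutual
information `I(α)` satisfies `1/e < α⋆ < 1 - 1/e`. -/
theorem capacity_achieving_binary_input_mem_Ioo {Y : Type*} [Fintype Y]
    (hY : 2 ≤ Fintype.card Y)
    (P₁ P₂ : Y → ℝ)
    (hP₁ : ∀ y, 0 ≤ P₁ y) (hP₁sum : ∑ y, P₁ y = 1)
    (hP₂ : ∀ y, 0 ≤ P₂ y) (hP₂sum : ∑ y, P₂ y = 1)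
    (hne : P₁ ≠ P₂)
    (Q : ℝ → Y → ℝ) (hQ : ∀ α y, Q α y = α * P₁ y + (1 - α) * P₂ y)
    (I : ℝ → ℝ)
    (hI : ∀ α, I α = ∑ y, (α * P₁ y * Real.log (P₁ y / Q α y)
      + (1 - α) * P₂ y * Real.log (P₂ y / Q α y)))
    (αstar : ℝ) (hαstar : αstar ∈ Set.Icc (0 : ℝ) 1)
    (hmax : ∀ α ∈ Set.Icc (0 : ℝ) 1, I α ≤ I αstar) :
    (Real.exp 1)⁻¹ < αstar ∧ αstar < 1 - (Real.exp 1)⁻¹ :=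
  capacity_achieving_binary_input_mem_Ioo_general P₁ P₂ hP₁ hP₁sum hP₂ hP₂sum hne Q hQ I hI αstar
    hαstar hmax
end

section
/- The bound $1 - \frac{1}{e}$ on the maximum symbol probability of a capacity achieving input distribution is tight: for every $\epsilon > 0$ there exist a binary-input binary-output discrete memoryless channel $(\{0,1\}, W(y|x), \{0,1\})$ with positive capacity and a capacity achieving input distribution $P^*$ such that $\max_{x \in \{0,1\}} P^*(x) > 1 - \frac{1}{e} - \epsilon$. -/
/-!
For the Z-channel that delivers input `1` correctly only with a small probability `p`, the
input `P*` that equalizes the relative entropies `D(W(·|x) ‖ P* W)` of the two rows is capacity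
achieving, since `I(P) ≤ ∑ₓ P(x) D(W(·|x) ‖ Q)` for every output distribution `Q`. Solving the
equalization gives `P*(1) = 1 / (p + (1 - p) ^ (-(1 - p) / p)) < exp (p - 1)`, so
`P*(0) > 1 - exp (p - 1)`, which tends to `1 - 1/e` as `p → 0`.
-/

open Real Filter Topology

section MutualInformation

variable {α β : Type*} [Fintype α] [Fintype β]

noncomputable def outputDist (W : α → β → ℝ) (P : α → ℝ) (y : β) : ℝ :=
  ∑ x, P x * W x y

noncomputable def relEntropy (w q : β → ℝ) : ℝ :=
  ∑ y, w y * log (w y / q y)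

noncomputable def mutualInfo (W : α → β → ℝ) (P : α → ℝ) : ℝ :=
  ∑ x, ∑ y, P x * W x y * log (W x y / outputDist W P y)

theorem mutualInfo_eq_sum_mul_relEntropy (W : α → β → ℝ) (P : α → ℝ) :
    mutualInfo W P = ∑ x, P x * relEntropy (W x) (outputDist W P) := by
  simp only [mutualInfo, relEntropy, Finset.mul_sum, mul_assoc]

theorem sum_outputDist {W : α → β → ℝ} {P : α → ℝ} (hW : ∀ x, ∑ y, W x y = 1) :
    ∑ y, outputDist W P y = ∑ x, P x := by
  simp only [outputDist]
  rw [Finset.sum_comm]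
  simp only [← Finset.mul_sum, hW, mul_one]

theorem mul_log_sub_log_le_sub {r q : ℝ} (hr : 0 ≤ r) (hq : 0 < q) :
    r * (log q - log r) ≤ q - r := by
  rcases hr.eq_or_lt with rfl | hr
  · simpa using hq.le
  calc r * (log q - log r) = r * log (q / r) := by rw [log_div hq.ne' hr.ne']
    _ ≤ r * (q / r - 1) := mul_le_mul_of_nonneg_left (log_le_sub_one_of_pos (div_pos hq hr)) hr.le
    _ = q - r := by field_simp

/-- The difference of the two sides is `D(P W ‖ Q) ≥ 0`. -/
theorem mutualInfo_le_sum_mul_relEntropy {W : α → β → ℝ} {P : α → ℝ} {Q : β → ℝ}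
    (hW : ∀ x y, 0 ≤ W x y) (hW1 : ∀ x, ∑ y, W x y = 1) (hP : ∀ x, 0 ≤ P x)
    (hP1 : ∑ x, P x = 1) (hQ : ∀ y, 0 < Q y) (hQ1 : ∑ y, Q y = 1) :
    mutualInfo W P ≤ ∑ x, P x * relEntropy (W x) Q := by
  set R := outputDist W P
  have hterm : ∀ x y, P x * W x y * log (W x y / R y) =
      P x * W x y * log (W x y / Q y) + P x * W x y * (log (Q y) - log (R y)) := by
    intro x y
    rcases (mul_nonneg (hP x) (hW x y)).eq_or_lt with h | h
    · simp [← h]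
    have hPW : 0 < P x * W x y := h
    have hWxy : 0 < W x y := pos_of_mul_pos_right hPW (hP x)
    have hR : 0 < R y := hPW.trans_le <|
      Finset.single_le_sum (fun x' _ ↦ mul_nonneg (hP x') (hW x' y)) (Finset.mem_univ x)
    rw [log_div hWxy.ne' hR.ne', log_div hWxy.ne' (hQ y).ne']
    ring
  have hgap : ∑ x, ∑ y, P x * W x y * (log (Q y) - log (R y)) ≤ 0 := by
    calc ∑ x, ∑ y, P x * W x y * (log (Q y) - log (R y))
        = ∑ y, R y * (log (Q y) - log (R y)) := by
          rw [Finset.sum_comm]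
          simp only [R, outputDist, Finset.sum_mul]
      _ ≤ ∑ y, (Q y - R y) := Finset.sum_le_sum fun y _ ↦
          mul_log_sub_log_le_sub (Finset.sum_nonneg fun x _ ↦ mul_nonneg (hP x) (hW x y)) (hQ y)
      _ = 0 := by rw [Finset.sum_sub_distrib, hQ1, sum_outputDist hW1, hP1, sub_self]
  calc mutualInfo W P
      = ∑ x, P x * relEntropy (W x) Q + ∑ x, ∑ y, P x * W x y * (log (Q y) - log (R y)) := by
        change ∑ x, ∑ y, P x * W x y * log (W x y / R y) = _
        simp only [hterm, Finset.sum_add_distrib]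
        simp only [relEntropy, Finset.mul_sum, mul_assoc]
    _ ≤ ∑ x, P x * relEntropy (W x) Q := by linarith

theorem mutualInfo_le_of_relEntropy_le {W : α → β → ℝ} {P : α → ℝ} {Q : β → ℝ}
    {C : ℝ}
    (hW : ∀ x y, 0 ≤ W x y) (hW1 : ∀ x, ∑ y, W x y = 1) (hP : ∀ x, 0 ≤ P x)
    (hP1 : ∑ x, P x = 1) (hQ : ∀ y, 0 < Q y) (hQ1 : ∑ y, Q y = 1)
    (hC : ∀ x, relEntropy (W x) Q ≤ C) :
    mutualInfo W P ≤ C :=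
  calc mutualInfo W P ≤ ∑ x, P x * relEntropy (W x) Q :=
        mutualInfo_le_sum_mul_relEntropy hW hW1 hP hP1 hQ hQ1
    _ ≤ ∑ x, P x * C := Finset.sum_le_sum fun x _ ↦ mul_le_mul_of_nonneg_left (hC x) (hP x)
    _ = C := by rw [← Finset.sum_mul, hP1, one_mul]

end MutualInformation

section ZChannel

noncomputable def zChannel (p : ℝ) : Fin 2 → Fin 2 → ℝ :=
  ![![1, 0], ![1 - p, p]]

noncomputable def zExponent (p : ℝ) : ℝ :=
  -((1 - p) * log (1 - p)) / p

/-- With `s = zInputOne p` and `t = zExponent p`, the output of `![1 - s, s]` is `![s eᵗ, s p]`;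
`p t = -(1 - p) log (1 - p)` is exactly what makes both rows of `zChannel p` have the same
relative entropy from it. -/
noncomputable def zInputOne (p : ℝ) : ℝ :=
  (p + exp (zExponent p))⁻¹

noncomputable def zOptimalInput (p : ℝ) : Fin 2 → ℝ :=
  ![1 - zInputOne p, zInputOne p]

noncomputable def zCapacity (p : ℝ) : ℝ :=
  log (p + exp (zExponent p)) - zExponent p

theorem zChannel_nonneg {p : ℝ} (hp0 : 0 ≤ p) (hp1 : p ≤ 1) (x y : Fin 2) :
    0 ≤ zChannel p x y := by
  fin_cases x <;> fin_cases y <;> simp [zChannel, hp0, hp1]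

theorem sum_zChannel (p : ℝ) (x : Fin 2) : ∑ y, zChannel p x y = 1 := by
  fin_cases x <;> simp [zChannel, Fin.sum_univ_two]

theorem mul_zExponent {p : ℝ} (hp : p ≠ 0) : p * zExponent p = -((1 - p) * log (1 - p)) := by
  rw [zExponent, mul_div_cancel₀ _ hp]

theorem one_sub_lt_zExponent {p : ℝ} (hp0 : 0 < p) (hp1 : p < 1) : 1 - p < zExponent p := by
  have hlog : log (1 - p) < -p := by
    linarith [log_lt_sub_one_of_pos (sub_pos.2 hp1) (by linarith : 1 - p ≠ 1)]
  rw [zExponent, lt_div_iff₀ hp0]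
  nlinarith

theorem zInputOne_pos {p : ℝ} (hp : 0 ≤ p) : 0 < zInputOne p := by
  unfold zInputOne
  positivity

theorem zInputOne_lt_exp_sub_one {p : ℝ} (hp0 : 0 < p) (hp1 : p < 1) :
    zInputOne p < exp (p - 1) := by
  calc zInputOne p < (exp (zExponent p))⁻¹ := inv_strictAnti₀ (exp_pos _) (by linarith)
    _ = exp (-zExponent p) := (exp_neg _).symm
    _ < exp (p - 1) := exp_lt_exp.2 (by linarith [one_sub_lt_zExponent hp0 hp1])

theorem zInputOne_lt_one {p : ℝ} (hp0 : 0 < p) (hp1 : p < 1) : zInputOne p < 1 :=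
  (zInputOne_lt_exp_sub_one hp0 hp1).trans (exp_lt_one_iff.2 (by linarith))

theorem zOptimalInput_nonneg {p : ℝ} (hp0 : 0 < p) (hp1 : p < 1) (x : Fin 2) :
    0 ≤ zOptimalInput p x := by
  fin_cases x
  · simpa [zOptimalInput] using (zInputOne_lt_one hp0 hp1).le
  · simpa [zOptimalInput] using (zInputOne_pos hp0.le).le

theorem sum_zOptimalInput (p : ℝ) : ∑ x, zOptimalInput p x = 1 := by
  simp [zOptimalInput, Fin.sum_univ_two]

theorem outputDist_zChannel_zOptimalInput {p : ℝ} (hp : 0 ≤ p) :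
    outputDist (zChannel p) (zOptimalInput p) =
      ![zInputOne p * exp (zExponent p), zInputOne p * p] := by
  have hs : zInputOne p * (p + exp (zExponent p)) = 1 :=
    inv_mul_cancel₀ (by positivity)
  ext y
  fin_cases y
  · simp only [outputDist, zOptimalInput, zChannel, Fin.sum_univ_two, Fin.zero_eta,
      Matrix.cons_val_zero, Matrix.cons_val_one, mul_one]
    linear_combination -hs
  · simp [outputDist, zChannel, zOptimalInput, Fin.sum_univ_two]

theorem relEntropy_zChannel_zOptimalInput {p : ℝ} (hp0 : 0 < p) (hp1 : p < 1) (x : Fin 2) :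
    relEntropy (zChannel p x) (outputDist (zChannel p) (zOptimalInput p)) = zCapacity p := by
  have hs := zInputOne_pos hp0.le
  have hlog_s : log (zInputOne p) = -log (p + exp (zExponent p)) := by
    rw [zInputOne, log_inv]
  have hlog_out : log (zInputOne p * exp (zExponent p)) = -zCapacity p := by
    rw [log_mul hs.ne' (exp_pos _).ne', log_exp, hlog_s, zCapacity]
    ring
  rw [outputDist_zChannel_zOptimalInput hp0.le]
  fin_cases x
  · simp only [relEntropy, zChannel, Fin.sum_univ_two, Matrix.cons_val_zero, Matrix.cons_val_one,
      Fin.zero_eta, one_mul, zero_mul, add_zero, one_div, log_inv, hlog_out, neg_neg]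
  · simp only [relEntropy, zChannel, Fin.sum_univ_two, Matrix.cons_val_zero, Matrix.cons_val_one,
      Fin.mk_one]
    rw [log_div (by linarith) (by positivity), log_div hp0.ne' (by positivity), hlog_out,
      log_mul hs.ne' hp0.ne', hlog_s, zCapacity]
    linear_combination mul_zExponent hp0.ne'

theorem mutualInfo_zChannel_zOptimalInput {p : ℝ} (hp0 : 0 < p) (hp1 : p < 1) :
    mutualInfo (zChannel p) (zOptimalInput p) = zCapacity p := by
  simp only [mutualInfo_eq_sum_mul_relEntropy, relEntropy_zChannel_zOptimalInput hp0 hp1,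
    ← Finset.sum_mul, sum_zOptimalInput, one_mul]

theorem mutualInfo_zChannel_le {p : ℝ} (hp0 : 0 < p) (hp1 : p < 1) {P : Fin 2 → ℝ}
    (hP : ∀ x, 0 ≤ P x) (hP1 : ∑ x, P x = 1) :
    mutualInfo (zChannel p) P ≤ zCapacity p := by
  refine mutualInfo_le_of_relEntropy_le (zChannel_nonneg hp0.le hp1.le) (sum_zChannel p) hP hP1
    ?_ ?_ fun x ↦ (relEntropy_zChannel_zOptimalInput hp0 hp1 x).le
  · have hs := zInputOne_pos hp0.le
    intro y
    rw [outputDist_zChannel_zOptimalInput hp0.le]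
    fin_cases y
    exacts [mul_pos hs (exp_pos _), mul_pos hs hp0]
  · rw [sum_outputDist (sum_zChannel p), sum_zOptimalInput]

theorem zCapacity_pos {p : ℝ} (hp : 0 < p) : 0 < zCapacity p := by
  rw [zCapacity, sub_pos]
  calc zExponent p = log (exp (zExponent p)) := (log_exp _).symm
    _ < log (p + exp (zExponent p)) := log_lt_log (exp_pos _) (by linarith)

end ZChannel

theorem exists_exp_sub_one_lt {ε : ℝ} (hε : 0 < ε) :
    ∃ p : ℝ, 0 < p ∧ p < 1 ∧ exp (p - 1) < (exp 1)⁻¹ + ε := by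
  have hlim : Tendsto (fun p ↦ exp (p - 1)) (𝓝[>] 0) (𝓝 (exp 1)⁻¹) := by
    refine ((by fun_prop : Continuous fun p : ℝ ↦ exp (p - 1)).tendsto' 0 _ ?_).mono_left
      nhdsWithin_le_nhds
    rw [zero_sub, exp_neg]
  obtain ⟨p, hlt, hp0, hp1⟩ := ((hlim.eventually (gt_mem_nhds (lt_add_of_pos_right _ hε))).and
    (Ioo_mem_nhdsGT one_pos)).exists
  exact ⟨p, hp0, hp1, hlt⟩

/-- Tightness of the `1 - 1/e` bound: for every `ε > 0` there is a binary-input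
binary-output DMC with positive capacity and a capacity achieving input
distribution `Pstar` one of whose entries exceeds `1 - 1/e - ε`. -/
theorem one_sub_inv_e_bound_tight (ε : ℝ) (hε : 0 < ε) :
    ∃ (W : Fin 2 → Fin 2 → ℝ) (Pstar : Fin 2 → ℝ),
      (∀ x y, 0 ≤ W x y) ∧ (∀ x, ∑ y, W x y = 1) ∧
      (∀ x, 0 ≤ Pstar x) ∧ (∑ x, Pstar x = 1) ∧
      (∀ P : Fin 2 → ℝ, (∀ x, 0 ≤ P x) → ∑ x, P x = 1 →
        (∑ x, ∑ y, P x * W x y * Real.log (W x y / ∑ x', P x' * W x' y))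
          ≤ ∑ x, ∑ y, Pstar x * W x y * Real.log (W x y / ∑ x', Pstar x' * W x' y)) ∧
      (0 < ∑ x, ∑ y, Pstar x * W x y * Real.log (W x y / ∑ x', Pstar x' * W x' y)) ∧
      (∃ x, 1 - (Real.exp 1)⁻¹ - ε < Pstar x) := by
  obtain ⟨p, hp0, hp1, hpε⟩ := exists_exp_sub_one_lt hε
  have hI := mutualInfo_zChannel_zOptimalInput hp0 hp1
  refine ⟨zChannel p, zOptimalInput p, zChannel_nonneg hp0.le hp1.le, sum_zChannel p,
    zOptimalInput_nonneg hp0 hp1, sum_zOptimalInput p,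
    fun P hP hP1 ↦ (mutualInfo_zChannel_le hp0 hp1 hP hP1).trans hI.ge,
    (zCapacity_pos hp0).trans_eq hI.symm, 0, ?_⟩
  have hs := zInputOne_lt_exp_sub_one hp0 hp1
  simp only [zOptimalInput, Matrix.cons_val_zero]
  linarith
end

section
/- Let $g(p_1, p_2) = p_1 \log\frac{p_1}{\frac{1}{e}p_1 + (1-\frac{1}{e})p_2} - p_2 \log\frac{p_2}{\frac{1}{e}p_1 + (1-\frac{1}{e})p_2} - (p_1 - p_2)$ for $p_1, p_2 \in (0,1]$. Then for fixed $p_2$, the second partial derivative of $g$ with respect to $p_1$ equals $\frac{p_2\left((e-1)^2 p_2 - p_1\right)}{p_1\left(p_1 + (e-1)p_2\right)^2}$; in particular, for fixed $p_2 = c > 0$, the map $p_1 \mapsto g(p_1, c)$ is convex on $\{p_1 : 0 < p_1 < (e-1)^2 c\}$ and concave on $\{p_1 : p_1 > (e-1)^2 c\}$. -/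
open BigOperators

noncomputable def g (p₁ p₂ : ℝ) : ℝ :=
  p₁ * Real.log (p₁ / ((Real.exp 1)⁻¹ * p₁ + (1 - (Real.exp 1)⁻¹) * p₂))
    - p₂ * Real.log (p₂ / ((Real.exp 1)⁻¹ * p₁ + (1 - (Real.exp 1)⁻¹) * p₂))
    - (p₁ - p₂)

/-!
Write `m = w t + (1 - w) p` for a weight `w ∈ [0, 1]`. Since `∂m/∂t = w` and `m - w (t - p) = p`,
differentiating `t log (t/m) - p log (p/m) - (t - p)` twice in `t` gives
`1/t - w/m - w p/m² = p ((1 - w)² p - w² t) / (t m²)`,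
whose sign is that of `(1 - w)² p - w² t`. At `w = 1/e` one has `1 - w = w (e - 1)`, so the
common factor `w²` cancels and the threshold becomes `t = (e - 1)² p`.
-/

open Real Set Filter Topology

noncomputable def weightedG (w t p : ℝ) : ℝ :=
  t * log (t / (w * t + (1 - w) * p)) - p * log (p / (w * t + (1 - w) * p)) - (t - p)

lemma g_eq_weightedG : g = weightedG (exp 1)⁻¹ := rfl

lemma hasDerivAt_weightedMean (w p t : ℝ) :
    HasDerivAt (fun s => w * s + (1 - w) * p) w t := by
  simpa using ((hasDerivAt_id t).const_mul w).add_const ((1 - w) * p)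

section WeightedG

variable {w t p : ℝ}

lemma weightedMean_pos (hw : w ∈ Icc (0 : ℝ) 1) (ht : 0 < t) (hp : 0 < p) :
    0 < w * t + (1 - w) * p :=
  convex_Ioi (0 : ℝ) ht hp hw.1 (sub_nonneg.2 hw.2) (add_sub_cancel w 1)

lemma hasDerivAt_weightedG (hw : w ∈ Icc (0 : ℝ) 1) (ht : 0 < t) (hp : 0 < p) :
    HasDerivAt (weightedG w · p)
      (log t - log (w * t + (1 - w) * p) - w * (t - p) / (w * t + (1 - w) * p)) t := by
  have hm := (weightedMean_pos hw ht hp).ne'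
  have hm' := hasDerivAt_weightedMean w p t
  have hlog_t := ((hasDerivAt_id t).div hm' hm).log (div_ne_zero ht.ne' hm)
  have hlog_p := ((hasDerivAt_const t p).div hm' hm).log (div_ne_zero hp.ne' hm)
  refine ((((hasDerivAt_id t).mul hlog_t).sub (hlog_p.const_mul p)).sub
    ((hasDerivAt_id t).sub_const p)).congr_deriv ?_
  simp only [Pi.div_apply, id, log_div ht.ne' hm]
  field_simp
  ring

lemma hasDerivAt_deriv_weightedG (hw : w ∈ Icc (0 : ℝ) 1) (ht : 0 < t) (hp : 0 < p) :
    HasDerivAt (deriv (weightedG w · p))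
      (p * ((1 - w) ^ 2 * p - w ^ 2 * t) / (t * (w * t + (1 - w) * p) ^ 2)) t := by
  have hderiv : deriv (weightedG w · p) =ᶠ[𝓝 t]
      fun s => log s - log (w * s + (1 - w) * p) - w * (s - p) / (w * s + (1 - w) * p) := by
    filter_upwards [Ioi_mem_nhds ht] with s hs using (hasDerivAt_weightedG hw hs hp).deriv
  refine HasDerivAt.congr_of_eventuallyEq ?_ hderiv
  have hm := (weightedMean_pos hw ht hp).ne'
  have hm' := hasDerivAt_weightedMean w p t
  refine (((hasDerivAt_log ht.ne').sub (hm'.log hm)).sub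
    ((((hasDerivAt_id t).sub_const p).const_mul w).div hm' hm)).congr_deriv ?_
  have ht0 := ht.ne'
  simp only [id]
  generalize hm_def : w * t + (1 - w) * p = m at hm ⊢
  field_simp
  subst hm_def
  ring

lemma deriv_deriv_weightedG (hw : w ∈ Icc (0 : ℝ) 1) (ht : 0 < t) (hp : 0 < p) :
    deriv (deriv (weightedG w · p)) t
      = p * ((1 - w) ^ 2 * p - w ^ 2 * t) / (t * (w * t + (1 - w) * p) ^ 2) :=
  (hasDerivAt_deriv_weightedG hw ht hp).deriv

lemma differentiableOn_weightedG (hw : w ∈ Icc (0 : ℝ) 1) (hp : 0 < p) :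
    DifferentiableOn ℝ (weightedG w · p) (Ioi 0) := fun _ ht =>
  (hasDerivAt_weightedG hw ht hp).differentiableAt.differentiableWithinAt

lemma differentiableOn_deriv_weightedG (hw : w ∈ Icc (0 : ℝ) 1) (hp : 0 < p) :
    DifferentiableOn ℝ (deriv (weightedG w · p)) (Ioi 0) := fun _ ht =>
  (hasDerivAt_deriv_weightedG hw ht hp).differentiableAt.differentiableWithinAt

theorem convexOn_weightedG (hw : w ∈ Icc (0 : ℝ) 1) (hp : 0 < p) :
    ConvexOn ℝ {t | 0 < t ∧ w ^ 2 * t ≤ (1 - w) ^ 2 * p} (weightedG w · p) := by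
  have hconvex : Convex ℝ {t | 0 < t ∧ w ^ 2 * t ≤ (1 - w) ^ 2 * p} :=
    Set.OrdConnected.convex ⟨fun _ hx _ hy _ hz =>
      ⟨hx.1.trans_le hz.1, (mul_le_mul_of_nonneg_left hz.2 (sq_nonneg w)).trans hy.2⟩⟩
  refine convexOn_of_deriv2_nonneg' hconvex
    ((differentiableOn_weightedG hw hp).mono fun _ ht => ht.1)
    ((differentiableOn_deriv_weightedG hw hp).mono fun _ ht => ht.1) fun t ht => ?_
  rw [Function.iterate_succ_apply, Function.iterate_one, deriv_deriv_weightedG hw ht.1 hp]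
  have := ht.1
  exact div_nonneg (mul_nonneg hp.le (sub_nonneg.2 ht.2)) (by positivity)

theorem concaveOn_weightedG (hw : w ∈ Icc (0 : ℝ) 1) (hp : 0 < p) :
    ConcaveOn ℝ {t | 0 < t ∧ (1 - w) ^ 2 * p ≤ w ^ 2 * t} (weightedG w · p) := by
  have hconvex : Convex ℝ {t | 0 < t ∧ (1 - w) ^ 2 * p ≤ w ^ 2 * t} :=
    Set.OrdConnected.convex ⟨fun _ hx _ _ _ hz =>
      ⟨hx.1.trans_le hz.1, hx.2.trans (mul_le_mul_of_nonneg_left hz.1 (sq_nonneg w))⟩⟩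
  refine concaveOn_of_deriv2_nonpos' hconvex
    ((differentiableOn_weightedG hw hp).mono fun _ ht => ht.1)
    ((differentiableOn_deriv_weightedG hw hp).mono fun _ ht => ht.1) fun t ht => ?_
  rw [Function.iterate_succ_apply, Function.iterate_one, deriv_deriv_weightedG hw ht.1 hp]
  have := ht.1
  exact div_nonpos_of_nonpos_of_nonneg (mul_nonpos_of_nonneg_of_nonpos hp.le
    (sub_nonpos.2 ht.2)) (by positivity)

end WeightedG

lemma inv_exp_one_mem_Icc : (exp 1)⁻¹ ∈ Icc (0 : ℝ) 1 :=
  ⟨inv_nonneg.2 (exp_pos 1).le, inv_le_one_of_one_le₀ (one_le_exp zero_le_one)⟩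

lemma one_sub_inv_exp_one : 1 - (exp 1)⁻¹ = (exp 1)⁻¹ * (exp 1 - 1) := by
  field_simp [(exp_pos 1).ne']

lemma inv_exp_one_sq_mul_le_iff {x y : ℝ} :
    (exp 1)⁻¹ ^ 2 * x ≤ (exp 1)⁻¹ ^ 2 * y ↔ x ≤ y :=
  mul_le_mul_iff_right₀ (by positivity)

/-- For `p₁, p₂ ∈ (0,1]`, the second partial derivative of `g` in `p₁` equals
`p₂((e-1)² p₂ - p₁) / (p₁ (p₁ + (e-1) p₂)²)`; in particular, for fixed
`p₂ = c > 0`, `p₁ ↦ g(p₁, c)` is convex on `{p₁ : 0 < p₁ < (e-1)² c}` and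
concave on `{p₁ : (e-1)² c < p₁}`. -/
theorem second_deriv_g_and_convexity :
    (∀ p₂ ∈ Set.Ioc (0 : ℝ) 1, ∀ p₁ ∈ Set.Ioc (0 : ℝ) 1,
      deriv (deriv (fun t => g t p₂)) p₁
        = p₂ * ((Real.exp 1 - 1) ^ 2 * p₂ - p₁)
            / (p₁ * (p₁ + (Real.exp 1 - 1) * p₂) ^ 2)) ∧
    (∀ c ∈ Set.Ioc (0 : ℝ) 1,
      ConvexOn ℝ {p₁ : ℝ | 0 < p₁ ∧ p₁ < (Real.exp 1 - 1) ^ 2 * c}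
        (fun t => g t c) ∧
      ConcaveOn ℝ {p₁ : ℝ | (Real.exp 1 - 1) ^ 2 * c < p₁}
        (fun t => g t c)) := by
  have hw := inv_exp_one_mem_Icc
  have hthreshold_pos : 0 < (exp 1 - 1) ^ 2 := pow_pos (by linarith [add_one_le_exp 1]) 2
  rw [g_eq_weightedG]
  refine ⟨fun p₂ hp₂ p₁ hp₁ => ?_, fun c hc => ⟨?_, ?_⟩⟩
  · rw [deriv_deriv_weightedG hw hp₁.1 hp₂.1, one_sub_inv_exp_one]
    field_simp [(exp_pos 1).ne']
  · refine (convexOn_weightedG hw hc.1).subset (fun t ht => ⟨ht.1, ?_⟩) (convex_Ioo _ _)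
    rw [one_sub_inv_exp_one, mul_pow, mul_assoc, inv_exp_one_sq_mul_le_iff]
    exact ht.2.le
  · refine (concaveOn_weightedG hw hc.1).subset (fun t ht => ⟨?_, ?_⟩) (convex_Ioi _)
    · exact (mul_pos hthreshold_pos hc.1).trans ht
    · rw [one_sub_inv_exp_one, mul_pow, mul_assoc, inv_exp_one_sq_mul_le_iff]
      exact ht.le
end

section
/- For every $c \in [0,1]$, one has $\log\frac{e}{1 + (e-1)c} - c \log\frac{c\, e}{1 + (e-1)c} - (1 - c) \ge 0$; equivalently, $f(1/e; 1, c) \ge 0$ where $f(\alpha; p_1, p_2) = p_1 \log\frac{p_1}{\alpha p_1 + (1-\alpha)p_2} - p_2 \log\frac{p_2}{\alpha p_1 + (1-\alpha)p_2} - (p_1 - p_2)$. -/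
/-!
With `D = 1 + (e - 1) c`, the expression equals `-((1 - c) log D + c log c)`. Concavity of `log`
with weights `1 - c` and `c` at the points `D` and `c e` gives
`(1 - c) log D + c log c + c ≤ log (1 + (e - 2) c + c²)`, and the quadratic
`1 + (e - 2) c + c²` stays below `eᶜ` on `[0, 1]`, touching it at both endpoints.
-/

open Real Set

lemma one_sub_add_sq_div_two_sub_cube_div_six_le_exp_neg {t : ℝ} (ht : 0 ≤ t) :
    1 - t + t ^ 2 / 2 - t ^ 3 / 6 ≤ exp (-t) := by
  -- `(p + p') eˣ = -(x³/6) eˣ` for the cubic Taylor polynomial `p` of `e⁻ˣ`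
  set g : ℝ → ℝ := fun x ↦ (1 - x + x ^ 2 / 2 - x ^ 3 / 6) * exp x
  have hderiv (x : ℝ) : HasDerivAt g (-(x ^ 3 / 6) * exp x) x :=
    (((((hasDerivAt_id' x).const_sub 1).add ((hasDerivAt_pow 2 x).div_const 2)).sub
      ((hasDerivAt_pow 3 x).div_const 6)).mul (hasDerivAt_exp x)).congr_deriv
      (by simp only [Pi.add_apply, Pi.sub_apply]; ring)
  have hanti : AntitoneOn g (Ici 0) := by
    refine antitoneOn_of_deriv_nonpos (convex_Ici 0)
      (fun x _ ↦ (hderiv x).continuousAt.continuousWithinAt)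
      (fun x _ ↦ (hderiv x).differentiableAt.differentiableWithinAt) fun x hx ↦ ?_
    rw [interior_Ici, mem_Ioi] at hx
    rw [(hderiv x).deriv]
    nlinarith [pow_pos hx 3, exp_pos x]
  have hle : g t ≤ 1 := by simpa [g] using hanti self_mem_Ici ht ht
  rwa [exp_neg, inv_eq_one_div, le_div_iff₀ (exp_pos t)]

lemma one_add_mul_add_sq_le_exp {c : ℝ} (hc0 : 0 ≤ c) (hc1 : c ≤ 1) :
    1 + (exp 1 - 2) * c + c ^ 2 ≤ exp c := by
  have he_lt := exp_one_lt_d9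
  have he_gt := exp_one_gt_d9
  rcases le_total c (1 / 2) with hc | hc
  · have hs := sum_le_exp_of_nonneg hc0 4
    norm_num [Finset.sum_range_succ, Nat.factorial] at hs
    nlinarith [pow_nonneg hc0 3]
  · -- expand around `c = 1`, where the two sides agree
    have h := one_sub_add_sq_div_two_sub_cube_div_six_le_exp_neg (sub_nonneg.2 hc1)
    have hexp : exp c = exp 1 * exp (-(1 - c)) := by rw [← exp_add]; ring_nf
    rw [hexp]
    have := mul_le_mul_of_nonneg_left h (exp_pos 1).le
    nlinarith [mul_nonneg (mul_nonneg (sub_nonneg.2 hc1) (sub_nonneg.2 hc1)) (sub_nonneg.2 hc)]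

lemma one_sub_mul_log_add_mul_log_nonpos {c : ℝ} (hc0 : 0 < c) (hc1 : c ≤ 1) :
    (1 - c) * log (1 + (exp 1 - 1) * c) + c * log c ≤ 0 := by
  have he := exp_one_gt_two
  have hD : 0 < 1 + (exp 1 - 1) * c := by nlinarith
  have hce : 0 < c * exp 1 := mul_pos hc0 (exp_pos 1)
  have hM : 0 < 1 + (exp 1 - 2) * c + c ^ 2 := by nlinarith
  have hmix : (1 - c) * (1 + (exp 1 - 1) * c) + c * (c * exp 1) =
      1 + (exp 1 - 2) * c + c ^ 2 := by ring
  calc (1 - c) * log (1 + (exp 1 - 1) * c) + c * log c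
      = (1 - c) * log (1 + (exp 1 - 1) * c) + c * log (c * exp 1) - c := by
        rw [log_mul hc0.ne' (exp_pos 1).ne', log_exp]; ring
    _ ≤ log (1 + (exp 1 - 2) * c + c ^ 2) - c := by
        rw [← hmix]
        gcongr
        exact strictConcaveOn_log_Ioi.concaveOn.2 hD hce (sub_nonneg.2 hc1) hc0.le (by ring)
    _ ≤ c - c := by
        gcongr
        exact (log_le_iff_le_exp hM).2 (one_add_mul_add_sq_le_exp hc0.le hc1)
    _ = 0 := sub_self c

/-- Boundary case `p₁ = 1`: for every `c ∈ [0,1]`,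
`log(e / (1 + (e-1)c)) - c log(c e / (1 + (e-1)c)) - (1 - c) ≥ 0`,
i.e. `f(1/e; 1, c) ≥ 0` (with `0 log 0 = 0`, which holds automatically since
`Real.log 0 = 0`). -/
theorem f_at_inv_e_one_nonneg (c : ℝ) (hc : c ∈ Set.Icc (0 : ℝ) 1) :
    0 ≤ Real.log (Real.exp 1 / (1 + (Real.exp 1 - 1) * c))
      - c * Real.log (c * Real.exp 1 / (1 + (Real.exp 1 - 1) * c))
      - (1 - c) := by
  obtain ⟨hc0, hc1⟩ := hc
  rcases hc0.eq_or_lt with rfl | hc0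
  · simp
  have hD : 0 < 1 + (exp 1 - 1) * c := by nlinarith [exp_one_gt_two]
  rw [log_div (exp_pos 1).ne' hD.ne', log_div (mul_pos hc0 (exp_pos 1)).ne' hD.ne',
    log_mul hc0.ne' (exp_pos 1).ne', log_exp]
  linarith [one_sub_mul_log_add_mul_log_nonpos hc0 hc1]
end
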